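/- The inverse integer optimization problem (IIOP) is in coNP: if there are no λ ∈ ℝ^n_{≥0}, not all zero, making x* a minimizer of ∑_j λ_j f_j(x_j) over P ∩ ℤ^n, then there is a subset H' of at most n+1 Graver moves g ∈ G(D) with x* + g ∈ P, and rationals v_g ≥ 0 for g ∈ H', such that ∑_{g∈H'} v_g [f_j(x*_j + g_j) − f_j(x*_j)] < 0 for every j = 1,…,n; conversely any such v certifies infeasibility. -/

import Mathlib

/-!
By Gordan's alternative, no admissible `λ` exists iff some convex combination of `0` and the
increment vectors `(f_j(x*_j + g_j) - f_j(x*_j))_j` of the feasible Graver moves `g` is strictly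
negative. The other side of the alternative is exactly optimality of `x*` for `∑ λ_j f_j`, because
Graver moves are a test set for separable convex objectives: every feasible direction is a
conformal sum of Graver moves, and separable convex functions are superadditive along conformal
sums. Carathéodory's theorem bounds the number of moves by `n + 1`, and a strictly negative
combination stays strictly negative when its weights are rounded up to nearby rationals.
-/

/-- `z` is a Graver basis element of `D`: a nonzero integer kernel element of `D` that is
not the sum of two nonzero sign-compatible integer kernel elements. -/
def InGraver {κ ι : Type*} [Fintype κ] [Fintype ι] (D : Matrix κ ι ℤ) (z : ι → ℤ) : Prop :=
  z ≠ 0 ∧ D.mulVec z = 0 ∧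
    ¬ ∃ u v : ι → ℤ, u ≠ 0 ∧ v ≠ 0 ∧ D.mulVec u = 0 ∧ D.mulVec v = 0 ∧
      (∀ j, 0 ≤ u j * v j) ∧ z = u + v

/-- Feasibility for `P = {x : Dx = d, 0 ≤ x ≤ u}` (integer points). -/
def Feas {dd n : ℕ} (D : Matrix (Fin dd) (Fin n) ℤ) (dv : Fin dd → ℤ)
    (u : Fin n → ℤ) (x : Fin n → ℤ) : Prop :=
  D.mulVec x = dv ∧ ∀ j, 0 ≤ x j ∧ x j ≤ u j

open Filter Topology Matrix

section SeparableConvex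

variable {ι : Type*} [Fintype ι]

theorem ConvexOn.map_add_add_map_add_le {S : Set ℝ} {f : ℝ → ℝ} (hf : ConvexOn ℝ S f)
    {a s t : ℝ} (ha : a ∈ S) (hb : a + s + t ∈ S) (hst : 0 ≤ s * t) :
    f (a + s) + f (a + t) ≤ f a + f (a + s + t) := by
  rcases eq_or_ne (s + t) 0 with h0 | h0
  · obtain ⟨rfl, rfl⟩ : s = 0 ∧ t = 0 := by
      rcases mul_nonneg_iff.mp hst with h | h <;> constructor <;> linarith [h.1, h.2]
    simp
  -- `a + s` and `a + t` are the convex combinations of `a + s + t` and `a` with weights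
  -- `s / (s + t)`, `t / (s + t)` and `t / (s + t)`, `s / (s + t)`.
  have hw : 0 ≤ s / (s + t) ∧ 0 ≤ t / (s + t) := by
    simp only [div_nonneg_iff]
    rcases mul_nonneg_iff.mp hst with ⟨hs, ht⟩ | ⟨hs, ht⟩
    · exact ⟨.inl ⟨hs, by linarith⟩, .inl ⟨ht, by linarith⟩⟩
    · exact ⟨.inr ⟨hs, by linarith⟩, .inr ⟨ht, by linarith⟩⟩
  have hsum : s / (s + t) + t / (s + t) = 1 := by rw [← add_div, div_self h0]
  have hs := hf.2 hb ha hw.1 hw.2 hsum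
  have ht := hf.2 hb ha hw.2 hw.1 (by rw [add_comm, hsum])
  rw [smul_eq_mul, smul_eq_mul, show s / (s + t) * (a + s + t) + t / (s + t) * a = a + s by
    field_simp; ring] at hs
  rw [smul_eq_mul, smul_eq_mul, show t / (s + t) * (a + s + t) + s / (s + t) * a = a + t by
    field_simp; ring] at ht
  simp only [smul_eq_mul] at hs ht
  calc f (a + s) + f (a + t)
      ≤ (s / (s + t) + t / (s + t)) * (f a + f (a + s + t)) := by linarith
    _ = f a + f (a + s + t) := by rw [hsum, one_mul]

def separableCost (lam : ι → ℝ) (f : ι → ℝ → ℝ) (x : ι → ℤ) : ℝ :=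
  ∑ j, lam j * f j (x j)

def moveIncrement (f : ι → ℝ → ℝ) (x g : ι → ℤ) : ι → ℝ :=
  fun j => f j (x j + g j) - f j (x j)

theorem separableCost_add_sub (lam : ι → ℝ) (f : ι → ℝ → ℝ) (x g : ι → ℤ) :
    separableCost lam f (x + g) - separableCost lam f x = ∑ j, lam j * moveIncrement f x g j := by
  simp only [separableCost, moveIncrement, ← Finset.sum_sub_distrib, Pi.add_apply, Int.cast_add,
    mul_sub]

variable {lam : ι → ℝ} {f : ι → ℝ → ℝ}

theorem separableCost_add_add_le (hf : ∀ j, ConvexOn ℝ Set.univ (f j)) (hlam : ∀ j, 0 ≤ lam j)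
    (x : ι → ℤ) {g h : ι → ℤ} (hgh : ∀ j, 0 ≤ g j * h j) :
    separableCost lam f (x + g) + separableCost lam f (x + h) ≤
      separableCost lam f x + separableCost lam f (x + g + h) := by
  simp only [separableCost, ← Finset.sum_add_distrib, ← mul_add]
  refine Finset.sum_le_sum fun j _ => mul_le_mul_of_nonneg_left ?_ (hlam j)
  simp only [Pi.add_apply, Int.cast_add]
  exact (hf j).map_add_add_map_add_le trivial trivial
    (by exact_mod_cast hgh j : (0 : ℝ) ≤ g j * h j)

theorem sum_map_separableCost_sub_le (hf : ∀ j, ConvexOn ℝ Set.univ (f j))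
    (hlam : ∀ j, 0 ≤ lam j) (x : ι → ℤ) {L : List (ι → ℤ)}
    (hL : ∀ g ∈ L, ∀ h ∈ L, ∀ j, 0 ≤ g j * h j) :
    (L.map fun g => separableCost lam f (x + g) - separableCost lam f x).sum ≤
      separableCost lam f (x + L.sum) - separableCost lam f x := by
  induction L with
  | nil => simp
  | cons g L ih =>
    have hrest : ∀ j, 0 ≤ g j * L.sum j := fun j => by
      rw [Pi.list_sum_apply, ← List.sum_map_mul_left]
      exact List.sum_nonneg fun _ hy => by
        obtain ⟨h, hh, rfl⟩ := List.mem_map.mp hy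
        exact hL g List.mem_cons_self h (List.mem_cons_of_mem _ hh) j
    have := separableCost_add_add_le hf hlam x hrest
    have := ih fun g hg h hh => hL g (List.mem_cons_of_mem _ hg) h (List.mem_cons_of_mem _ hh)
    simp only [List.map_cons, List.sum_cons, ← add_assoc]
    linarith

end SeparableConvex

section Graver

variable {κ ι : Type*} [Fintype κ] [Fintype ι]

theorem mem_uIcc_zero_add_of_mul_nonneg {a b : ℤ} (h : 0 ≤ a * b) : a ∈ Set.uIcc 0 (a + b) := by
  rw [Set.mem_uIcc]
  rcases mul_nonneg_iff.mp h with ⟨ha, hb⟩ | ⟨ha, hb⟩ <;> omega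

theorem mul_nonneg_of_mem_uIcc_zero {a b c : ℤ} (ha : a ∈ Set.uIcc 0 c) (hb : b ∈ Set.uIcc 0 c) :
    0 ≤ a * b := by
  rw [Set.mem_uIcc] at ha hb
  rcases ha with ⟨ha, ha'⟩ | ⟨ha', ha⟩ <;> rcases hb with ⟨hb, hb'⟩ | ⟨hb', hb⟩
  · exact mul_nonneg ha hb
  · obtain rfl : a = 0 := by omega
    simp
  · obtain rfl : b = 0 := by omega
    simp
  · exact mul_nonneg_of_nonpos_of_nonpos ha hb

theorem sum_natAbs_lt_sum_natAbs_add {p q : ι → ℤ} (hpq : ∀ j, 0 ≤ p j * q j) (hq : q ≠ 0) :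
    ∑ j, (p j).natAbs < ∑ j, ((p + q) j).natAbs := by
  have habs : ∀ j, (p j).natAbs + (q j).natAbs = ((p + q) j).natAbs := fun j => by
    rcases mul_nonneg_iff.mp (hpq j) with ⟨hp, hq⟩ | ⟨hp, hq⟩ <;> simp only [Pi.add_apply] <;> omega
  obtain ⟨j, hj⟩ := Function.ne_iff.mp hq
  refine Finset.sum_lt_sum (fun j _ => by have := habs j; omega) ⟨j, Finset.mem_univ j, ?_⟩
  have := habs j
  have : (q j).natAbs ≠ 0 := by simpa using hj
  omega

/-- `∀ j, g j ∈ Set.uIcc 0 (z j)` expresses that `g` is conformal to `z` (`g ⊑ z`). -/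
theorem exists_graver_decomposition (D : Matrix κ ι ℤ) {z : ι → ℤ} (hz : D *ᵥ z = 0) :
    ∃ L : List (ι → ℤ), L.sum = z ∧ ∀ g ∈ L, InGraver D g ∧ ∀ j, g j ∈ Set.uIcc 0 (z j) := by
  induction hN : ∑ j, (z j).natAbs using Nat.strong_induction_on generalizing z with
  | _ N ih =>
  by_cases hz0 : z = 0
  · exact ⟨[], by simp [hz0], by simp⟩
  by_cases hG : InGraver D z
  · refine ⟨[z], by simp, fun g hg => ?_⟩
    rw [List.mem_singleton.mp hg]
    exact ⟨hG, fun j => Set.right_mem_uIcc⟩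
  obtain ⟨p, q, hp0, hq0, hp, hq, hpq, rfl⟩ : ∃ p q : ι → ℤ, p ≠ 0 ∧ q ≠ 0 ∧ D *ᵥ p = 0 ∧
      D *ᵥ q = 0 ∧ (∀ j, 0 ≤ p j * q j) ∧ z = p + q := by
    by_contra h
    exact hG ⟨hz0, hz, h⟩
  have hqp : ∀ j, 0 ≤ q j * p j := fun j => mul_comm (p j) (q j) ▸ hpq j
  have hp_lt : ∑ j, (p j).natAbs < N := hN ▸ sum_natAbs_lt_sum_natAbs_add hpq hq0
  have hq_lt : ∑ j, (q j).natAbs < N := by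
    rw [← hN, add_comm]
    exact sum_natAbs_lt_sum_natAbs_add hqp hp0
  obtain ⟨Lp, hLp, hLpG⟩ := ih _ hp_lt hp rfl
  obtain ⟨Lq, hLq, hLqG⟩ := ih _ hq_lt hq rfl
  have hpz : ∀ j, p j ∈ Set.uIcc 0 ((p + q) j) := fun j => mem_uIcc_zero_add_of_mul_nonneg (hpq j)
  have hqz : ∀ j, q j ∈ Set.uIcc 0 ((p + q) j) := fun j => by
    simpa only [Pi.add_apply, add_comm] using mem_uIcc_zero_add_of_mul_nonneg (hqp j)
  refine ⟨Lp ++ Lq, by rw [List.sum_append, hLp, hLq], fun g hg => ?_⟩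
  rcases List.mem_append.mp hg with hg | hg
  · obtain ⟨hG, hgp⟩ := hLpG g hg
    exact ⟨hG, fun j => Set.uIcc_subset_uIcc_left (hpz j) (hgp j)⟩
  · obtain ⟨hG, hgq⟩ := hLqG g hg
    exact ⟨hG, fun j => Set.uIcc_subset_uIcc_left (hqz j) (hgq j)⟩

end Graver

section IntegerProgram

variable {dd n : ℕ} {D : Matrix (Fin dd) (Fin n) ℤ} {dv : Fin dd → ℤ} {u : Fin n → ℤ}

theorem Feas.add_of_conformal {x y g : Fin n → ℤ} (hx : Feas D dv u x) (hy : Feas D dv u y)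
    (hg : D *ᵥ g = 0) (hgxy : ∀ j, g j ∈ Set.uIcc 0 (y j - x j)) : Feas D dv u (x + g) := by
  refine ⟨by rw [mulVec_add, hx.1, hg, add_zero], fun j => ?_⟩
  have := hgxy j
  rw [Set.mem_uIcc] at this
  have := hx.2 j
  have := hy.2 j
  simp only [Pi.add_apply]
  omega

theorem separableCost_le_of_forall_graver_move {lam : Fin n → ℝ} {f : Fin n → ℝ → ℝ}
    (hf : ∀ j, ConvexOn ℝ Set.univ (f j)) (hlam : ∀ j, 0 ≤ lam j) {xs : Fin n → ℤ}
    (hxs : Feas D dv u xs)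
    (hmoves : ∀ g, InGraver D g → Feas D dv u (xs + g) →
      separableCost lam f xs ≤ separableCost lam f (xs + g))
    {x : Fin n → ℤ} (hx : Feas D dv u x) :
    separableCost lam f xs ≤ separableCost lam f x := by
  obtain ⟨L, hLsum, hL⟩ := exists_graver_decomposition D (z := x - xs)
    (by rw [mulVec_sub, hx.1, hxs.1, sub_self])
  have hsuper := sum_map_separableCost_sub_le hf hlam xs (L := L)
    fun g hg h hh j => mul_nonneg_of_mem_uIcc_zero ((hL g hg).2 j) ((hL h hh).2 j)
  have hnonneg : 0 ≤ (L.map fun g => separableCost lam f (xs + g) - separableCost lam f xs).sum :=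
    List.sum_nonneg fun _ ht => by
      obtain ⟨g, hg, rfl⟩ := List.mem_map.mp ht
      exact sub_nonneg.mpr
        (hmoves g (hL g hg).1 (hxs.add_of_conformal hx (hL g hg).1.2.1 (hL g hg).2))
  rw [hLsum, add_sub_cancel] at hsuper
  linarith

end IntegerProgram

theorem exists_rat_weights_of_sum_neg {ι α : Type*} [Finite ι] (H : Finset α) (F : α → ι → ℝ)
    {w : α → ℝ} (hw : ∀ g ∈ H, 0 ≤ w g) (hneg : ∀ j, ∑ g ∈ H, w g * F g j < 0) :
    ∃ v : α → ℚ, (∀ g ∈ H, 0 ≤ v g) ∧ ∀ j, ∑ g ∈ H, (v g : ℝ) * F g j < 0 := by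
  have hq : ∀ (k : ℕ) g, ∃ q : ℚ, w g < q ∧ (q : ℝ) < w g + 1 / (k + 1) := fun k g =>
    exists_rat_btwn (lt_add_of_pos_right _ Nat.one_div_pos_of_nat)
  choose q hq_gt hq_lt using hq
  have hlim : ∀ g, Tendsto (fun k => (q k g : ℝ)) atTop (𝓝 (w g)) := fun g => by
    refine tendsto_of_tendsto_of_tendsto_of_le_of_le tendsto_const_nhds ?_
      (fun k => (hq_gt k g).le) (fun k => (hq_lt k g).le)
    simpa using (tendsto_one_div_add_atTop_nhds_zero_nat (𝕜 := ℝ)).const_add (w g)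
  have hev : ∀ᶠ k in atTop, ∀ j, ∑ g ∈ H, (q k g : ℝ) * F g j < 0 :=
    eventually_all.mpr fun j => (tendsto_finsetSum H fun g _ => (hlim g).mul_const (F g j))
      |>.eventually_lt_const (hneg j)
  obtain ⟨k, hk⟩ := hev.exists
  exact ⟨q k, fun g hg => by exact_mod_cast (hw g hg).trans (hq_gt k g).le, hk⟩

section Duality

variable {ι : Type*} [Fintype ι]

/-- Gordan's alternative, in separation form. -/
theorem Convex.exists_nonneg_weights_of_forall_exists_nonneg {B : Set (ι → ℝ)}
    (hB : Convex ℝ B) (h0 : (0 : ι → ℝ) ∈ B) (hB' : ∀ y ∈ B, ∃ j, 0 ≤ y j) :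
    ∃ lam : ι → ℝ, (∀ j, 0 ≤ lam j) ∧ lam ≠ 0 ∧ ∀ y ∈ B, 0 ≤ ∑ j, lam j * y j := by
  classical
  set O : Set (ι → ℝ) := Set.univ.pi fun _ => Set.Iio 0
  have hO : IsOpen O := isOpen_set_pi Set.finite_univ fun _ _ => isOpen_Iio
  have hOB : Disjoint O B := Set.disjoint_left.mpr fun y hyO hyB => by
    obtain ⟨j, hj⟩ := hB' y hyB
    exact (hyO j (Set.mem_univ j)).not_ge hj
  obtain ⟨φ, c, hφO, hφB⟩ :=
    geometric_hahn_banach_open (convex_pi fun _ _ => convex_Iio 0) hO hB hOB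
  have hclosure : closure O = Set.univ.pi fun _ => Set.Iic 0 := by
    simp only [O, closure_pi_set, closure_Iio]
  have hφle : ∀ y ∈ closure O, φ y ≤ c :=
    closure_minimal (fun y hy => (hφO y hy).le) (isClosed_le φ.continuous continuous_const)
  -- `0` lies both in `B` and in the closure of the open orthant, which forces `c = 0`.
  have hc : c = 0 := by
    refine le_antisymm (by simpa using hφB 0 h0) ?_
    simpa using hφle 0 (by rw [hclosure]; exact fun j _ => Set.mem_Iic.mpr le_rfl)
  set lam : ι → ℝ := fun i => φ fun j => if i = j then 1 else 0
  have hφ : ∀ y, φ y = ∑ j, lam j * y j := fun y => by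
    simp only [lam, mul_comm, ← smul_eq_mul]
    exact LinearMap.pi_apply_eq_sum_univ φ.toLinearMap y
  refine ⟨lam, fun i => ?_, fun hlam => ?_, fun y hy => hφ y ▸ hc ▸ hφB y hy⟩
  · have := hφle (-fun j => if i = j then 1 else 0) (by
      rw [hclosure]
      intro j _
      simp only [Pi.neg_apply, Set.mem_Iic, neg_nonpos]
      split_ifs <;> norm_num)
    rw [map_neg, hc] at this
    exact neg_nonpos.mp this
  · have := hφO (fun _ => -1) fun j _ => Set.mem_Iio.mpr neg_one_lt_zero
    simp [hφ, hlam, hc] at this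

theorem exists_finset_of_mem_convexHull_insert_zero_image {E α : Type*} [AddCommGroup E]
    [Module ℝ E] [FiniteDimensional ℝ E] {M : Set α} {F : α → E} {p : E}
    (hp : p ∈ convexHull ℝ (insert 0 (F '' M))) :
    ∃ (H : Finset α) (w : α → ℝ), ↑H ⊆ M ∧ H.card ≤ Module.finrank ℝ E + 1 ∧
      (∀ g ∈ H, 0 ≤ w g) ∧ ∑ g ∈ H, w g • F g = p := by
  classical
  rw [convexHull_eq_union] at hp
  simp only [Set.mem_iUnion] at hp
  obtain ⟨t, ht, hind, hpt⟩ := hp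
  rw [Finset.convexHull_eq] at hpt
  obtain ⟨w, hw, hw1, rfl⟩ := hpt
  have hcard : t.card ≤ Module.finrank ℝ E + 1 := by
    have := hind.card_le_finrank_succ
    rw [Fintype.card_coe] at this
    exact this.trans (Nat.succ_le_succ (Submodule.finrank_le _))
  have hsurj : Set.SurjOn F M ↑(t.erase 0) := fun y hy => by
    obtain ⟨hy0, hyt⟩ := Finset.mem_erase.mp hy
    exact (ht hyt).resolve_left hy0
  obtain ⟨H, hHM, hinj, hH⟩ := Finset.exists_subset_injOn_image_eq_of_surjOn M _ hsurj
  refine ⟨H, w ∘ F, hHM, ?_, fun g hg => hw _ ?_, ?_⟩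
  · rw [← Finset.card_image_of_injOn hinj, hH]
    exact (Finset.card_erase_le).trans hcard
  · exact Finset.mem_of_mem_erase (hH ▸ Finset.mem_image_of_mem F hg)
  · have hzero : ∑ y ∈ t.erase 0, w y • y = ∑ y ∈ t, w y • y := Finset.sum_erase t (by simp)
    calc ∑ g ∈ H, (w ∘ F) g • F g = ∑ y ∈ H.image F, w y • y :=
          (Finset.sum_image (f := fun y => w y • y) hinj).symm
      _ = ∑ y ∈ t, w y • y := by rw [hH, hzero]
      _ = t.centerMass w id := (Finset.centerMass_eq_of_sum_1 _ _ hw1).symm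

theorem exists_improving_move_of_certificate {lam : ι → ℝ} {f : ι → ℝ → ℝ}
    (hlam : ∀ j, 0 ≤ lam j) (hlam0 : lam ≠ 0) {xs : ι → ℤ} {H : Finset (ι → ℤ)}
    {v : (ι → ℤ) → ℚ} (hv : ∀ g ∈ H, 0 ≤ v g)
    (hneg : ∀ j, ∑ g ∈ H, (v g : ℝ) * moveIncrement f xs g j < 0) :
    ∃ g ∈ H, separableCost lam f (xs + g) < separableCost lam f xs := by
  by_contra! hH
  obtain ⟨i, hi⟩ := Function.ne_iff.mp hlam0
  have hswap : ∑ j, lam j * ∑ g ∈ H, (v g : ℝ) * moveIncrement f xs g j =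
      ∑ g ∈ H, (v g : ℝ) * (separableCost lam f (xs + g) - separableCost lam f xs) := by
    simp only [separableCost_add_sub, Finset.mul_sum]
    rw [Finset.sum_comm]
    exact Finset.sum_congr rfl fun g _ => Finset.sum_congr rfl fun j _ => by ring
  have hlt : ∑ j, lam j * ∑ g ∈ H, (v g : ℝ) * moveIncrement f xs g j < 0 :=
    Finset.sum_neg' (fun j _ => mul_nonpos_of_nonneg_of_nonpos (hlam j) (hneg j).le)
      ⟨i, Finset.mem_univ i, mul_neg_of_pos_of_neg ((hlam i).lt_of_ne' hi) (hneg i)⟩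
  have hge : 0 ≤ ∑ g ∈ H, (v g : ℝ) * (separableCost lam f (xs + g) - separableCost lam f xs) :=
    Finset.sum_nonneg fun g hg => mul_nonneg (by exact_mod_cast hv g hg) (sub_nonneg.mpr (hH g hg))
  linarith

end Duality

/-- coNP certificate for (IIOP): no admissible weight vector `λ` exists iff there are
at most `n+1` feasible Graver moves and a nonnegative rational combination of them that
is strictly negative in every coordinate of the difference data. -/
theorem inverse_optimization_coNP_certificate
    (dd n : ℕ) (D : Matrix (Fin dd) (Fin n) ℤ) (dv : Fin dd → ℤ) (u : Fin n → ℤ)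
    (f : Fin n → ℝ → ℝ) (hconv : ∀ j, ConvexOn ℝ Set.univ (f j))
    (xs : Fin n → ℤ) (hxs : Feas D dv u xs) :
    (¬ ∃ lam : Fin n → ℝ, (∀ j, 0 ≤ lam j) ∧ lam ≠ 0 ∧
      ∀ x : Fin n → ℤ, Feas D dv u x →
        ∑ j, lam j * f j (xs j : ℝ) ≤ ∑ j, lam j * f j (x j : ℝ)) ↔
    (∃ H' : Finset (Fin n → ℤ), H'.card ≤ n + 1 ∧
      (∀ g ∈ H', InGraver D g ∧ Feas D dv u (xs + g)) ∧
      ∃ v : (Fin n → ℤ) → ℚ, (∀ g ∈ H', 0 ≤ v g) ∧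
        ∀ j, ∑ g ∈ H', (v g : ℝ) * (f j ((xs j : ℝ) + (g j : ℝ)) - f j (xs j : ℝ)) < 0) := by
  set M : Set (Fin n → ℤ) := {g | InGraver D g ∧ Feas D dv u (xs + g)}
  constructor
  · intro hno
    obtain ⟨p, hp, hp_neg⟩ :
        ∃ p ∈ convexHull ℝ (insert 0 (moveIncrement f xs '' M)), ∀ j, p j < 0 := by
      by_contra! hB
      obtain ⟨lam, hlam, hlam0, hdual⟩ :=
        (convex_convexHull ℝ _).exists_nonneg_weights_of_forall_exists_nonneg
          (subset_convexHull ℝ _ (Set.mem_insert _ _)) hB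
      refine hno ⟨lam, hlam, hlam0, fun x hx =>
        separableCost_le_of_forall_graver_move hconv hlam hxs (fun g hg hgx => ?_) hx⟩
      have := hdual _ (subset_convexHull ℝ _ (Set.mem_insert_of_mem _ ⟨g, ⟨hg, hgx⟩, rfl⟩))
      rw [← separableCost_add_sub] at this
      linarith
    obtain ⟨H, w, hHM, hcard, hw, rfl⟩ := exists_finset_of_mem_convexHull_insert_zero_image hp
    obtain ⟨v, hv, hv_neg⟩ := exists_rat_weights_of_sum_neg H _ hw fun j => by
      simpa only [Finset.sum_apply, Pi.smul_apply, smul_eq_mul] using hp_neg j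
    exact ⟨H, by simpa using hcard, hHM, v, hv, hv_neg⟩
  · rintro ⟨H, -, hH, v, hv, hneg⟩ ⟨lam, hlam, hlam0, hopt⟩
    obtain ⟨g, hg, hlt⟩ := exists_improving_move_of_certificate hlam hlam0 hv hneg
    exact hlt.not_ge (hopt _ (hH g hg).2)
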